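/- arXiv:2111.03131 — 2 statements merged into one kernel-verified Lean document; each statement's English description precedes it below -/
import Mathlib

section
/- Let H and H′ be graded connected cocommutative ℂ-bialgebras, each free on some set of homogeneous elements of positive degree, and assume every graded component H_n and H′_n is finite-dimensional. Then there exists a bialgebra isomorphism H → H′ carrying H_n onto H′_n for every n if and only if dim_ℂ H_n = dim_ℂ H′_n for all n ≥ 0. -/
/-!
A graded connected bialgebra `H` over `ℂ` has an antipode `S`, given on each `Hₙ` by a finite
geometric series in `ηε - id`. If `H` is cocommutative, the Dynkin operator `D = S ⋆ E`, with `E`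
multiplying `Hₙ` by `n`, takes primitive values, and `D x ≡ n x` modulo decomposables for
`x ∈ Hₙ`. So if `H` is free on homogeneous generators `x` of degrees `d x > 0`, it is also free on
the primitive elements `D x / d x`: the algebra endomorphism `x ↦ D x / d x` is onto in each degree
(by induction on the degree), hence bijective, the `Hₙ` being finite-dimensional.

The words of degree `n` in a homogeneous free generating set form a basis of `Hₙ`, so
`dim Hₙ = ∑_{i + j = n} #{generators of degree i} · dim Hⱼ` for `n > 0`, and the dimensions
determine the number of generators of each degree. If the dimensions agree, a degree-preserving
bijection between primitive free generating sets extends to an algebra isomorphism; it maps the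
graded pieces onto each other, and it respects counit and comultiplication because both sides are
algebra maps that agree on the primitive generators.
-/

open scoped TensorProduct

namespace PaperGradedBialg

/-- `H`, with the given family of subspaces `ℬ`, is a graded connected `ℂ`-bialgebra:
`H = ⨁ₙ ℬ n`, `ℬ 0 = ℂ·1`, the multiplication and comultiplication respect the grading,
and the counit vanishes in positive degrees. -/
def IsGradedConnected (H : Type) [Ring H] [Bialgebra ℂ H] (ℬ : ℕ → Submodule ℂ H) : Prop :=
  DirectSum.IsInternal ℬ ∧
  ℬ 0 = Submodule.span ℂ {1} ∧
  (∀ m n : ℕ, ℬ m * ℬ n ≤ ℬ (m + n)) ∧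
  (∀ n : ℕ, ∀ x ∈ ℬ n, Coalgebra.comul (R := ℂ) x ∈
    ⨆ p ∈ Finset.HasAntidiagonal.antidiagonal n,
      LinearMap.range (TensorProduct.map (ℬ p.1).subtype (ℬ p.2).subtype)) ∧
  (∀ n : ℕ, 0 < n → ∀ x ∈ ℬ n, Coalgebra.counit (R := ℂ) x = 0)

/-- `H` is cocommutative: `τ ∘ Δ = Δ` for the flip `τ`. -/
def IsCocommutative (H : Type) [Ring H] [Bialgebra ℂ H] : Prop :=
  ∀ x : H, TensorProduct.comm ℂ H H (Coalgebra.comul (R := ℂ) x) = Coalgebra.comul (R := ℂ) x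

/-- `H` is free as an associative unital `ℂ`-algebra on the set `F` of homogeneous
elements of positive degree: the canonical map from the free algebra on `F` is bijective. -/
def IsFreeOnHomogeneous (H : Type) [Ring H] [Algebra ℂ H] (ℬ : ℕ → Submodule ℂ H)
    (F : Set H) : Prop :=
  (∀ x ∈ F, ∃ n : ℕ, 0 < n ∧ x ∈ ℬ n) ∧
  Function.Bijective ⇑(FreeAlgebra.lift ℂ (Subtype.val : F → H))

end PaperGradedBialg

open Coalgebra WithConv

theorem iSupIndep.eq_of_le_of_iSup_eq_top {α ι : Type*} [CompleteLattice α] [IsModularLattice α]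
    {V B : ι → α} (hB : iSupIndep B) (hle : ∀ i, V i ≤ B i) (htop : ⨆ i, V i = ⊤) (i : ι) :
    V i = B i := by
  refine le_antisymm (hle i) ?_
  calc B i = (V i ⊔ ⨆ (j) (_ : j ≠ i), V j) ⊓ B i := by
        rw [← iSup_split_single, htop, top_inf_eq]
    _ = V i ⊔ (⨆ (j) (_ : j ≠ i), V j) ⊓ B i := sup_inf_assoc_of_le _ (hle i)
    _ ≤ V i ⊔ (⨆ (j) (_ : j ≠ i), B j) ⊓ B i := by gcongr with j _; exact hle j
    _ = V i := by rw [(hB i).symm.eq_bot, sup_bot_eq]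

namespace DirectSum.IsInternal

variable {ι R M N : Type*} [DecidableEq ι] [Semiring R] [AddCommMonoid M] [Module R M]
  [AddCommMonoid N] [Module R N] {ℬ : ι → Submodule R M}

noncomputable def glue (h : IsInternal ℬ) (c : ∀ i, ℬ i →ₗ[R] N) : M →ₗ[R] N :=
  toModule R ι N c ∘ₗ (LinearEquiv.ofBijective (coeLinearMap ℬ) h).symm.toLinearMap

theorem glue_apply_of_mem (h : IsInternal ℬ) (c : ∀ i, ℬ i →ₗ[R] N) {i : ι} {x : M}
    (hx : x ∈ ℬ i) : h.glue c x = c i ⟨x, hx⟩ := by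
  have : (LinearEquiv.ofBijective (coeLinearMap ℬ) h).symm x = lof R ι (fun i => ℬ i) i ⟨x, hx⟩ :=
    (LinearEquiv.ofBijective (coeLinearMap ℬ) h).injective <| by
      rw [LinearEquiv.apply_symm_apply]; exact (coeLinearMap_lof (R := R) ℬ i ⟨x, hx⟩).symm
  simp [glue, this]

theorem linearMap_ext (h : IsInternal ℬ) {f g : M →ₗ[R] N} (hfg : ∀ i, ∀ x ∈ ℬ i, f x = g x) :
    f = g :=
  LinearMap.ext_on (s := ⋃ i, (ℬ i : Set M))
    (by rw [← Submodule.iSup_eq_span, h.submodule_iSup_eq_top])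
    fun x hx => by obtain ⟨i, hi⟩ := Set.mem_iUnion.1 hx; exact hfg i x hi

theorem bijective_of_map_eq {K V : Type*} [Field K] [AddCommGroup V] [Module K V]
    {ℬ : ι → Submodule K V} (h : IsInternal ℬ) [∀ i, FiniteDimensional K (ℬ i)]
    {T : V →ₗ[K] V} (hT : ∀ i, (ℬ i).map T = ℬ i) : Function.Bijective T := by
  have hTi : ∀ i, ∀ x ∈ ℬ i, T x ∈ ℬ i := fun i x hx => hT i ▸ Submodule.mem_map_of_mem hx
  have hinj : ∀ i, Function.Injective (T.restrict (hTi i)) := fun i =>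
    LinearMap.injective_iff_surjective.2 fun ⟨y, hy⟩ => by
      rw [← hT i] at hy
      obtain ⟨x, hx, rfl⟩ := hy
      exact ⟨⟨x, hx⟩, rfl⟩
  have hcomm : T ∘ₗ coeLinearMap ℬ = coeLinearMap ℬ ∘ₗ lmap fun i => T.restrict (hTi i) := by
    ext i x; simp
  refine ⟨Function.Injective.of_comp_right (g := coeLinearMap ℬ) ?_ h.2, ?_⟩
  · rw [← LinearMap.coe_comp, hcomm, LinearMap.coe_comp]
    exact h.1.comp ((lmap_injective _).2 hinj)
  · rw [← LinearMap.range_eq_top, eq_top_iff, ← h.submodule_iSup_eq_top, iSup_le_iff]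
    exact fun i => hT i ▸ LinearMap.map_le_range

end DirectSum.IsInternal

theorem FreeAlgebra.basisFreeMonoid_apply (R X : Type*) [CommSemiring R] (w : FreeMonoid X) :
    basisFreeMonoid R X w = (w.toList.map (ι R)).prod := by
  simp [basisFreeMonoid, equivMonoidAlgebraFreeMonoid, MonoidAlgebra.lift_single,
    FreeMonoid.lift_apply]

noncomputable def FreeAlgebra.algEquivOfEquiv (R : Type*) [CommSemiring R] {X Y : Type*}
    (σ : X ≃ Y) : FreeAlgebra R X ≃ₐ[R] FreeAlgebra R Y :=
  .ofAlgHom (lift R (ι R ∘ σ)) (lift R (ι R ∘ σ.symm)) (by ext; simp) (by ext; simp)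

section FreeAlgebraEquiv

variable {R A B X Y : Type*} [CommSemiring R] [Semiring A] [Algebra R A] [Semiring B]
  [Algebra R B]

noncomputable def algEquivOfFree {u : X → A} {v : Y → B}
    (hu : Function.Bijective (FreeAlgebra.lift R u))
    (hv : Function.Bijective (FreeAlgebra.lift R v)) (σ : X ≃ Y) : A ≃ₐ[R] B :=
  (AlgEquiv.ofBijective _ hu).symm.trans
    ((FreeAlgebra.algEquivOfEquiv R σ).trans (AlgEquiv.ofBijective _ hv))

theorem algEquivOfFree_apply {u : X → A} {v : Y → B}
    (hu : Function.Bijective (FreeAlgebra.lift R u))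
    (hv : Function.Bijective (FreeAlgebra.lift R v)) (σ : X ≃ Y) (x : X) :
    algEquivOfFree hu hv σ (u x) = v (σ x) := by
  have : (AlgEquiv.ofBijective _ hu).symm (u x) = FreeAlgebra.ι R x :=
    (AlgEquiv.symm_apply_eq _).2 (by simp)
  simp [algEquivOfFree, this, FreeAlgebra.algEquivOfEquiv]

end FreeAlgebraEquiv

abbrev WordsOfDegree {X : Type*} (d : X → ℕ) (n : ℕ) := {l : List X // (l.map d).sum = n}

section WordCount

open Finset

variable {X Y : Type*}

noncomputable def wordsOfDegreeSuccEquiv (d : X → ℕ) (n : ℕ) :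
    (Σ p : antidiagonal (n + 1), {x // d x = p.1.1} × WordsOfDegree d p.1.2) ≃
      WordsOfDegree d (n + 1) :=
  Equiv.ofBijective (fun q => ⟨q.2.1.1 :: q.2.2.1, by
      simp [q.2.1.2, q.2.2.2, (mem_antidiagonal.1 q.1.2)]⟩) <| by
    constructor
    · rintro ⟨⟨p, hp⟩, ⟨x, hx⟩, ⟨t, ht⟩⟩ ⟨⟨p', hp'⟩, ⟨x', hx'⟩, ⟨t', ht'⟩⟩ h
      simp only [Subtype.mk.injEq, List.cons.injEq] at h
      obtain ⟨rfl, rfl⟩ := h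
      obtain rfl : p = p' := Prod.ext (hx.symm.trans hx') (ht.symm.trans ht')
      rfl
    · rintro ⟨_ | ⟨x, t⟩, hl⟩
      · simp at hl
      · exact ⟨⟨⟨(d x, (t.map d).sum), mem_antidiagonal.2 (by simpa using hl)⟩, ⟨x, rfl⟩, ⟨t, rfl⟩⟩,
          rfl⟩

theorem card_wordsOfDegree_zero {d : X → ℕ} (hd : ∀ x, 0 < d x) :
    Nat.card (WordsOfDegree d 0) = 1 := by
  refine Nat.card_eq_one_iff_exists.2 ⟨⟨[], rfl⟩, fun ⟨l, hl⟩ => ?_⟩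
  cases l with
  | nil => rfl
  | cons x t => have := hd x; simp at hl; omega

theorem finite_fiber_of_finite_wordsOfDegree {d : X → ℕ} (n : ℕ)
    [Finite (WordsOfDegree d n)] : Finite {x // d x = n} :=
  .of_injective (fun x => (⟨[x.1], by simp [x.2]⟩ : WordsOfDegree d n)) fun x y h => by
    simpa [Subtype.ext_iff] using h

theorem card_wordsOfDegree_succ {d : X → ℕ} [∀ n, Finite (WordsOfDegree d n)] (n : ℕ) :
    Nat.card (WordsOfDegree d (n + 1)) =
      ∑ p ∈ antidiagonal (n + 1), Nat.card {x // d x = p.1} * Nat.card (WordsOfDegree d p.2) := by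
  have := finite_fiber_of_finite_wordsOfDegree (d := d)
  rw [← Nat.card_congr (wordsOfDegreeSuccEquiv d n), Nat.card_sigma,
    ← sum_coe_sort (antidiagonal (n + 1))]
  simp [Nat.card_prod]

/-- Solve `W (n + 1) = ∑_{i + j = n + 1} L i * W j`, where `W 0 = 1`, for `L (n + 1)`. -/
theorem card_fiber_eq_of_card_wordsOfDegree_eq {d : X → ℕ} {d' : Y → ℕ} (hd : ∀ x, 0 < d x)
    (hd' : ∀ y, 0 < d' y) [∀ n, Finite (WordsOfDegree d n)] [∀ n, Finite (WordsOfDegree d' n)]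
    (hcard : ∀ n, Nat.card (WordsOfDegree d n) = Nat.card (WordsOfDegree d' n)) (n : ℕ) :
    Nat.card {x // d x = n} = Nat.card {y // d' y = n} := by
  induction n using Nat.strong_induction_on with
  | _ n ih =>
  cases n with
  | zero =>
    have : IsEmpty {x // d x = 0} := ⟨fun x => (hd x).ne' x.2⟩
    have : IsEmpty {y // d' y = 0} := ⟨fun y => (hd' y).ne' y.2⟩
    simp
  | succ n =>
    have h := hcard (n + 1)
    have hlower : ∀ p ∈ antidiagonal n,
        Nat.card {x // d x = p.1} * Nat.card (WordsOfDegree d (p.2 + 1)) =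
          Nat.card {y // d' y = p.1} * Nat.card (WordsOfDegree d' (p.2 + 1)) := fun p hp => by
      rw [ih p.1 (by have := mem_antidiagonal.1 hp; omega), hcard]
    rw [card_wordsOfDegree_succ, card_wordsOfDegree_succ, Nat.sum_antidiagonal_succ',
      Nat.sum_antidiagonal_succ', card_wordsOfDegree_zero hd, card_wordsOfDegree_zero hd',
      sum_congr rfl hlower] at h
    simpa using h

theorem exists_equiv_of_card_fiber_eq {d : X → ℕ} {d' : Y → ℕ} [∀ n, Finite {x // d x = n}]
    [∀ n, Finite {y // d' y = n}] (h : ∀ n, Nat.card {x // d x = n} = Nat.card {y // d' y = n}) :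
    ∃ σ : X ≃ Y, ∀ x, d' (σ x) = d x :=
  ⟨.ofFiberEquiv fun n => (Finite.card_eq.1 (h n)).some, Equiv.ofFiberEquiv_map _⟩

end WordCount

def decomposables {R A : Type*} [CommSemiring R] [Semiring A] [Algebra R A]
    (ℬ : ℕ → Submodule R A) (n : ℕ) : Submodule R A :=
  ⨆ (p : ℕ × ℕ) (_ : 0 < p.1 ∧ 0 < p.2 ∧ p.1 + p.2 = n), ℬ p.1 * ℬ p.2

theorem mul_mem_decomposables {R A : Type*} [CommSemiring R] [Semiring A] [Algebra R A]
    {ℬ : ℕ → Submodule R A} {i j : ℕ} (hi : 0 < i) (hj : 0 < j) {a b : A} (ha : a ∈ ℬ i)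
    (hb : b ∈ ℬ j) : a * b ∈ decomposables ℬ (i + j) :=
  Submodule.mem_iSup_of_mem (i, j) <|
    Submodule.mem_iSup_of_mem ⟨hi, hj, rfl⟩ (Submodule.mul_mem_mul ha hb)

section Words

variable {R A B X : Type*} [CommSemiring R] [Semiring A] [Algebra R A] [Semiring B]
  [Algebra R B]

variable (R) in
def wordSpan (u : X → A) (d : X → ℕ) (n : ℕ) : Submodule R A :=
  Submodule.span R ((fun l : List X => (l.map u).prod) '' {l | (l.map d).sum = n})

theorem map_wordSpan (φ : A →ₐ[R] B) (u : X → A) (d : X → ℕ) (n : ℕ) :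
    (wordSpan R u d n).map φ.toLinearMap = wordSpan R (φ ∘ u) d n := by
  rw [wordSpan, wordSpan, Submodule.map_span, Set.image_image]
  simp [map_list_prod]

noncomputable def wordBasis {u : X → A} (hu : Function.Bijective (FreeAlgebra.lift R u)) :
    Module.Basis (List X) R A :=
  ((FreeAlgebra.basisFreeMonoid R X).map
    (AlgEquiv.ofBijective (FreeAlgebra.lift R u) hu).toLinearEquiv).reindex FreeMonoid.toList

theorem coe_wordBasis {u : X → A} (hu : Function.Bijective (FreeAlgebra.lift R u)) :
    ⇑(wordBasis hu) = fun l => (l.map u).prod := by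
  ext l
  simp [wordBasis, FreeAlgebra.basisFreeMonoid_apply, map_list_prod]

variable {ℬ : ℕ → Submodule R A} [SetLike.GradedMonoid ℬ] {u : X → A} {d : X → ℕ}

theorem wordSpan_le (hud : ∀ x, u x ∈ ℬ (d x)) (n : ℕ) : wordSpan R u d n ≤ ℬ n := by
  rw [wordSpan, Submodule.span_le]
  rintro _ ⟨l, rfl, rfl⟩
  exact SetLike.list_prod_map_mem_graded l d u fun x _ => hud x

end Words

section FreeGraded

variable {R A B X Y : Type*} [CommRing R] [Ring A] [Algebra R A] [Ring B] [Algebra R B]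
  {ℬ : ℕ → Submodule R A} [SetLike.GradedMonoid ℬ] {u : X → A} {d : X → ℕ}

theorem wordSpan_eq (hℬ : DirectSum.IsInternal ℬ) (hud : ∀ x, u x ∈ ℬ (d x))
    (hu : Function.Bijective (FreeAlgebra.lift R u)) (n : ℕ) : wordSpan R u d n = ℬ n := by
  refine hℬ.submodule_iSupIndep.eq_of_le_of_iSup_eq_top (wordSpan_le hud) (top_unique ?_) n
  rw [← (wordBasis hu).span_eq, Submodule.span_le, coe_wordBasis]
  rintro _ ⟨l, rfl⟩
  exact Submodule.mem_iSup_of_mem _ (Submodule.subset_span ⟨l, rfl, rfl⟩)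

theorem map_le_of_free {ℬ' : ℕ → Submodule R B} [SetLike.GradedMonoid ℬ']
    (hℬ : DirectSum.IsInternal ℬ) (hud : ∀ x, u x ∈ ℬ (d x))
    (hu : Function.Bijective (FreeAlgebra.lift R u)) (φ : A →ₐ[R] B)
    (hφ : ∀ x, φ (u x) ∈ ℬ' (d x)) (n : ℕ) : (ℬ n).map φ.toLinearMap ≤ ℬ' n := by
  rw [← wordSpan_eq hℬ hud hu n, map_wordSpan]
  exact wordSpan_le hφ n

noncomputable def basisWordsOfDegree (hℬ : DirectSum.IsInternal ℬ) (hud : ∀ x, u x ∈ ℬ (d x))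
    (hu : Function.Bijective (FreeAlgebra.lift R u)) (n : ℕ) :
    Module.Basis (WordsOfDegree d n) R (ℬ n) :=
  (Module.Basis.span ((wordBasis hu).linearIndependent.comp _ Subtype.val_injective)).map
    (LinearEquiv.ofEq _ _ <| by
      rw [← wordSpan_eq hℬ hud hu n, wordSpan, Set.range_comp, Subtype.range_coe_subtype,
        coe_wordBasis])

theorem finite_wordsOfDegree [Nontrivial R] (hℬ : DirectSum.IsInternal ℬ)
    (hud : ∀ x, u x ∈ ℬ (d x)) (hu : Function.Bijective (FreeAlgebra.lift R u)) (n : ℕ)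
    [Module.Finite R (ℬ n)] : Finite (WordsOfDegree d n) :=
  Module.Finite.finite_basis (basisWordsOfDegree hℬ hud hu n)

theorem finrank_eq_card_wordsOfDegree [StrongRankCondition R] (hℬ : DirectSum.IsInternal ℬ)
    (hud : ∀ x, u x ∈ ℬ (d x)) (hu : Function.Bijective (FreeAlgebra.lift R u)) (n : ℕ) :
    Module.finrank R (ℬ n) = Nat.card (WordsOfDegree d n) :=
  Module.finrank_eq_nat_card_basis (basisWordsOfDegree hℬ hud hu n)

theorem le_map_of_sub_mem_decomposables (hℬ : DirectSum.IsInternal ℬ) (hd : ∀ x, 0 < d x)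
    (hud : ∀ x, u x ∈ ℬ (d x)) (hu : Function.Bijective (FreeAlgebra.lift R u)) (T : A →ₐ[R] A)
    (hT : ∀ x, u x - T (u x) ∈ decomposables ℬ (d x)) (n : ℕ) :
    ℬ n ≤ (ℬ n).map T.toLinearMap := by
  induction n using Nat.strong_induction_on with
  | _ n ih =>
  have hmul : ∀ i j, (ℬ i).map T.toLinearMap * (ℬ j).map T.toLinearMap ≤
      (ℬ (i + j)).map T.toLinearMap := fun i j => by
    rw [← Submodule.map_mul]
    exact Submodule.map_mono (Submodule.mul_le.2 fun a ha b hb => SetLike.mul_mem_graded ha hb)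
  -- the decomposables of degree `d x ≤ n` only involve degrees `< n`, where `ih` applies
  have hgen : ∀ x, d x ≤ n → u x ∈ (ℬ (d x)).map T.toLinearMap := fun x hx => by
    have hdec : decomposables ℬ (d x) ≤ (ℬ (d x)).map T.toLinearMap :=
      iSup₂_le fun p hp => hp.2.2 ▸
        (mul_le_mul' (ih p.1 (by omega)) (ih p.2 (by omega))).trans (hmul p.1 p.2)
    simpa using add_mem (Submodule.mem_map_of_mem (f := T.toLinearMap) (hud x)) (hdec (hT x))
  refine (wordSpan_eq hℬ hud hu n).ge.trans ?_
  rw [wordSpan, Submodule.span_le]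
  rintro _ ⟨_ | ⟨x, t⟩, hl, rfl⟩
  · subst hl
    exact ⟨1, SetLike.GradedOne.one_mem, map_one T⟩
  · simp only [Set.mem_ofPred_eq, List.map_cons, List.sum_cons] at hl
    subst hl
    simp only [List.map_cons, List.prod_cons]
    exact hmul _ _ (Submodule.mul_mem_mul (hgen x (by omega)) (ih _ (by have := hd x; omega)
      (SetLike.list_prod_map_mem_graded t d u fun y _ => hud y)))

theorem AlgEquiv.map_eq_of_free {ℬ' : ℕ → Submodule R B} [SetLike.GradedMonoid ℬ']
    (hℬ : DirectSum.IsInternal ℬ) (hℬ' : DirectSum.IsInternal ℬ') (hud : ∀ x, u x ∈ ℬ (d x))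
    (hu : Function.Bijective (FreeAlgebra.lift R u)) {v : Y → B} {d' : Y → ℕ}
    (hvd : ∀ y, v y ∈ ℬ' (d' y)) (hv : Function.Bijective (FreeAlgebra.lift R v))
    (e : A ≃ₐ[R] B) (σ : X ≃ Y) (he : ∀ x, e (u x) = v (σ x)) (hσ : ∀ x, d' (σ x) = d x)
    (n : ℕ) : (ℬ n).map e.toLinearMap = ℬ' n := by
  have he' : ∀ y, e.symm (v y) = u (σ.symm y) := fun y => by
    rw [AlgEquiv.symm_apply_eq, he, Equiv.apply_symm_apply]
  refine le_antisymm (map_le_of_free hℬ hud hu e.toAlgHom (fun x => ?_) n) fun y hy =>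
    ⟨e.symm y, map_le_of_free hℬ' hvd hv e.symm.toAlgHom (fun y => ?_) n ⟨y, hy, rfl⟩,
      e.apply_symm_apply y⟩
  · simpa [he, hσ] using hvd (σ x)
  · simpa [he', ← hσ (σ.symm y)] using hud (σ.symm y)

end FreeGraded

theorem exists_equiv_comp_eq_of_finrank_eq {K A B X Y : Type*} [Field K] [Ring A] [Algebra K A]
    [Ring B] [Algebra K B] {ℬ : ℕ → Submodule K A} [SetLike.GradedMonoid ℬ]
    [∀ n, FiniteDimensional K (ℬ n)] {ℬ' : ℕ → Submodule K B} [SetLike.GradedMonoid ℬ']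
    [∀ n, FiniteDimensional K (ℬ' n)] (hℬ : DirectSum.IsInternal ℬ)
    (hℬ' : DirectSum.IsInternal ℬ') {u : X → A} {d : X → ℕ} (hd : ∀ x, 0 < d x)
    (hud : ∀ x, u x ∈ ℬ (d x)) (hu : Function.Bijective (FreeAlgebra.lift K u)) {v : Y → B}
    {d' : Y → ℕ} (hd' : ∀ y, 0 < d' y) (hvd : ∀ y, v y ∈ ℬ' (d' y))
    (hv : Function.Bijective (FreeAlgebra.lift K v))
    (hdim : ∀ n, Module.finrank K (ℬ n) = Module.finrank K (ℬ' n)) :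
    ∃ σ : X ≃ Y, ∀ x, d' (σ x) = d x := by
  have := finite_wordsOfDegree hℬ hud hu
  have := finite_wordsOfDegree hℬ' hvd hv
  have := finite_fiber_of_finite_wordsOfDegree (d := d)
  have := finite_fiber_of_finite_wordsOfDegree (d := d')
  refine exists_equiv_of_card_fiber_eq <| card_fiber_eq_of_card_wordsOfDegree_eq hd hd' fun n => ?_
  rw [← finrank_eq_card_wordsOfDegree hℬ hud hu, ← finrank_eq_card_wordsOfDegree hℬ' hvd hv, hdim]

section Primitive

variable {R A : Type*} [CommSemiring R] [Semiring A]

variable (R) in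
def IsPrimitive [Bialgebra R A] (a : A) : Prop := comul (R := R) a = a ⊗ₜ 1 + 1 ⊗ₜ a

theorem IsPrimitive.smul [Bialgebra R A] {a : A} (h : IsPrimitive R a) (c : R) :
    IsPrimitive R (c • a) := by
  rw [IsPrimitive, map_smul, h, smul_add, TensorProduct.smul_tmul', TensorProduct.tmul_smul]

end Primitive

section PrimitiveRing

variable {R A B X : Type*} [CommRing R] [Semiring A] [Semiring B] [Bialgebra R A] [Bialgebra R B]

theorem IsPrimitive.counit_eq_zero {a : A} (h : IsPrimitive R a) : counit (R := R) a = 0 := by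
  have := congrArg
    (counit (R := R) ∘ TensorProduct.lid R A ∘ (counit (R := R) (A := A)).rTensor A) h
  simpa [Coalgebra.rTensor_counit_comul] using this

noncomputable def AlgEquiv.toBialgEquivOfIsPrimitive (e : A ≃ₐ[R] B) {u : X → A}
    (hu : Function.Surjective (FreeAlgebra.lift R u)) (hpu : ∀ x, IsPrimitive R (u x))
    (hpe : ∀ x, IsPrimitive R (e (u x))) : A ≃ₐc[R] B :=
  BialgEquiv.ofAlgEquiv e
    ((AlgHom.cancel_right hu).1 <| FreeAlgebra.hom_ext <| funext fun x => by
      simp [(hpu x).counit_eq_zero, (hpe x).counit_eq_zero])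
    ((AlgHom.cancel_right hu).1 <| FreeAlgebra.hom_ext <| funext fun x => by
      have h := hpu x
      have h' := hpe x
      rw [IsPrimitive] at h h'
      simp [h, h'])

end PrimitiveRing

section comulMap

variable {R C A B : Type*} [CommSemiring R] [AddCommMonoid C] [Module R C] [Coalgebra R C]
  [Semiring A] [Algebra R A] [Semiring B] [Algebra R B]

noncomputable def comulMap (f : WithConv (C →ₗ[R] A)) (g : WithConv (C →ₗ[R] B)) :
    WithConv (C →ₗ[R] A ⊗[R] B) :=
  toConv ((TensorProduct.map f.ofConv g.ofConv) ∘ₗ comul)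

theorem comulMap_convMul [IsCocomm R C] (f f' : WithConv (C →ₗ[R] A))
    (g g' : WithConv (C →ₗ[R] B)) : comulMap f g * comulMap f' g' = comulMap (f * f') (g * g') := by
  have := LinearMap.convMul_comp_coalgHom_distrib (toConv (TensorProduct.map f.ofConv g.ofConv))
    (toConv (TensorProduct.map f'.ofConv g'.ofConv)) (comulCoalgHom R C)
  rw [TensorProduct.map_convMul_map] at this
  exact WithConv.ext this.symm

theorem comulMap_one_right_apply (f : WithConv (C →ₗ[R] A)) (c : C) :
    comulMap f (1 : WithConv (C →ₗ[R] B)) c = f c ⊗ₜ 1 := by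
  have : TensorProduct.map f.ofConv (1 : WithConv (C →ₗ[R] B)).ofConv =
      TensorProduct.map f.ofConv (Algebra.linearMap R B) ∘ₗ counit.lTensor C := by
    rw [LinearMap.lTensor, ← TensorProduct.map_comp, LinearMap.comp_id]; rfl
  change TensorProduct.map f.ofConv (1 : WithConv (C →ₗ[R] B)).ofConv (comul c) = _
  rw [this, LinearMap.comp_apply, Coalgebra.lTensor_counit_comul]
  simp

theorem comulMap_one_left_apply (g : WithConv (C →ₗ[R] B)) (c : C) :
    comulMap (1 : WithConv (C →ₗ[R] A)) g c = 1 ⊗ₜ g c := by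
  have : TensorProduct.map (1 : WithConv (C →ₗ[R] A)).ofConv g.ofConv =
      TensorProduct.map (Algebra.linearMap R A) g.ofConv ∘ₗ counit.rTensor C := by
    rw [LinearMap.rTensor, ← TensorProduct.map_comp, LinearMap.comp_id]; rfl
  change TensorProduct.map (1 : WithConv (C →ₗ[R] A)).ofConv g.ofConv (comul c) = _
  rw [this, LinearMap.comp_apply, Coalgebra.rTensor_counit_comul]
  simp

theorem comulMap_one_one : comulMap (1 : WithConv (C →ₗ[R] A)) (1 : WithConv (C →ₗ[R] B)) = 1 := by
  ext c
  rw [comulMap_one_right_apply]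
  simp [Algebra.algebraMap_eq_smul_one, TensorProduct.smul_tmul', Algebra.TensorProduct.one_def]

end comulMap

section Hopf

variable {R H : Type*} [CommSemiring R] [Semiring H]

theorem comul_comp_convMul [Bialgebra R H] (f g : WithConv (H →ₗ[R] H)) :
    toConv (comul ∘ₗ (f * g).ofConv) = toConv (comul ∘ₗ f.ofConv) * toConv (comul ∘ₗ g.ofConv) :=
  WithConv.ext (LinearMap.algHom_comp_convMul_distrib (Bialgebra.comulAlgHom R H) f g)

theorem comul_comp_antipode [HopfAlgebra R H] [IsCocomm R H] :
    toConv (comul ∘ₗ HopfAlgebra.antipode R (A := H)) =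
      comulMap (toConv (HopfAlgebra.antipode R)) (toConv (HopfAlgebra.antipode R)) := by
  refine (left_inv_eq_right_inv (a := toConv (comul (R := R) (A := H))) ?_
    LinearMap.comul_right_inv).symm
  have : toConv (comul (R := R) (A := H)) = comulMap (toConv .id) (toConv .id) := by
    simp [comulMap]
  rw [this, comulMap_convMul, LinearMap.antipode_mul_id, comulMap_one_one]

end Hopf

def PreservesGrading {ι R M : Type*} [Semiring R] [AddCommMonoid M] [Module R M]
    (ℬ : ι → Submodule R M) (f : M →ₗ[R] M) : Prop :=
  ∀ i, ∀ x ∈ ℬ i, f x ∈ ℬ i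

namespace PaperGradedBialg.IsGradedConnected

section Bialgebra

variable {H : Type} [Ring H] [Bialgebra ℂ H] {ℬ : ℕ → Submodule ℂ H}

theorem gradedMonoid (hgr : IsGradedConnected H ℬ) : SetLike.GradedMonoid ℬ where
  one_mem := by rw [hgr.2.1]; exact Submodule.mem_span_singleton_self 1
  mul_mem i j _ _ ha hb := hgr.2.2.1 i j (Submodule.mul_mem_mul ha hb)

theorem counit_smul_one (hgr : IsGradedConnected H ℬ) {x : H} (hx : x ∈ ℬ 0) :
    counit (R := ℂ) x • (1 : H) = x := by
  rw [hgr.2.1] at hx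
  obtain ⟨c, rfl⟩ := Submodule.mem_span_singleton.1 hx
  simp

theorem comul_induction (hgr : IsGradedConnected H ℬ) {n : ℕ} {x : H} (hx : x ∈ ℬ n)
    {P : H ⊗[ℂ] H → Prop} (zero : P 0) (add : ∀ u v, P u → P v → P (u + v))
    (tmul : ∀ i j, i + j = n → ∀ a ∈ ℬ i, ∀ b ∈ ℬ j, P (a ⊗ₜ b)) : P (comul (R := ℂ) x) := by
  refine Submodule.iSup_induction _ (motive := P) (hgr.2.2.2.1 n x hx) (fun p y hy => ?_) zero add
  refine Submodule.iSup_induction _ (motive := P) hy (fun hp y hy => ?_) zero add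
  obtain ⟨t, rfl⟩ := hy
  induction t using TensorProduct.induction_on with
  | zero => simpa using zero
  | tmul a b =>
    exact tmul p.1 p.2 (Finset.HasAntidiagonal.mem_antidiagonal.1 hp) a a.2 b b.2
  | add s t hs ht => rw [map_add]; exact add _ _ hs ht

theorem convOne_preservesGrading (hgr : IsGradedConnected H ℬ) :
    PreservesGrading ℬ (1 : WithConv (H →ₗ[ℂ] H)).ofConv := by
  rintro (_ | n) x hx
  · simpa [Algebra.algebraMap_eq_smul_one, hgr.counit_smul_one hx] using hx
  · simp [hgr.2.2.2.2 _ n.succ_pos x hx]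

theorem convMul_preservesGrading (hgr : IsGradedConnected H ℬ) {f g : WithConv (H →ₗ[ℂ] H)}
    (hf : PreservesGrading ℬ f.ofConv) (hg : PreservesGrading ℬ g.ofConv) :
    PreservesGrading ℬ (f * g).ofConv := by
  intro n x hx
  refine hgr.comul_induction hx
    (P := fun z => LinearMap.mul' ℂ H (TensorProduct.map f.ofConv g.ofConv z) ∈ ℬ n)
    (by simp) (fun u v hu hv => by simpa using add_mem hu hv) fun i j hij a ha b hb => ?_
  simpa [← hij] using hgr.2.2.1 i j (Submodule.mul_mem_mul (hf i a ha) (hg j b hb))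

theorem convMul_apply_congr (hgr : IsGradedConnected H ℬ) {f f' g g' : WithConv (H →ₗ[ℂ] H)}
    {n : ℕ} (hf : ∀ i ≤ n, ∀ a ∈ ℬ i, f a = f' a) (hg : ∀ j ≤ n, ∀ b ∈ ℬ j, g b = g' b)
    {x : H} (hx : x ∈ ℬ n) : (f * g) x = (f' * g') x := by
  refine hgr.comul_induction hx
    (P := fun z => LinearMap.mul' ℂ H (TensorProduct.map f.ofConv g.ofConv z) =
      LinearMap.mul' ℂ H (TensorProduct.map f'.ofConv g'.ofConv z))
    (by simp) (fun u v hu hv => by simp [hu, hv]) fun i j hij a ha b hb => ?_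
  simp [hf i (by omega) a ha, hg j (by omega) b hb]

theorem oneSubId_preservesGrading (hgr : IsGradedConnected H ℬ) :
    PreservesGrading ℬ (1 - toConv LinearMap.id : WithConv (H →ₗ[ℂ] H)).ofConv :=
  fun n x hx => by simpa using sub_mem (hgr.convOne_preservesGrading n x hx) hx

theorem oneSubId_pow_apply_eq_zero (hgr : IsGradedConnected H ℬ) {k n : ℕ} (hnk : n < k)
    {x : H} (hx : x ∈ ℬ n) : ((1 - toConv LinearMap.id : WithConv (H →ₗ[ℂ] H)) ^ k) x = 0 := by
  set N : WithConv (H →ₗ[ℂ] H) := 1 - toConv LinearMap.id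
  induction k generalizing n x with
  | zero => omega
  | succ k ih =>
    rw [pow_succ']
    refine hgr.comul_induction hx
      (P := fun z => LinearMap.mul' ℂ H (TensorProduct.map N.ofConv (N ^ k).ofConv z) = 0)
      (by simp) (fun u v hu hv => by simp [hu, hv]) fun i j hij a ha b hb => ?_
    rcases i with _ | i
    · have : N a = 0 := by
        change (1 : WithConv (H →ₗ[ℂ] H)) a - a = 0
        rw [LinearMap.convOne_apply, Algebra.algebraMap_eq_smul_one, hgr.counit_smul_one ha,
          sub_self]
      simp [this]
    · simp [ih (by omega) hb]

theorem exists_antipode (hgr : IsGradedConnected H ℬ) :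
    ∃ S : H →ₗ[ℂ] H, PreservesGrading ℬ S ∧ toConv S * toConv LinearMap.id = 1 ∧
      toConv LinearMap.id * toConv S = 1 := by
  -- `id = 1 - N` where `N ^ k` vanishes on `ℬ n` for `k > n`, so `∑ N ^ k` inverts `id` degreewise
  set N : WithConv (H →ₗ[ℂ] H) := 1 - toConv LinearMap.id
  have hN : ∀ k, PreservesGrading ℬ (N ^ k).ofConv := fun k => by
    induction k with
    | zero => exact hgr.convOne_preservesGrading
    | succ k ih =>
      rw [pow_succ]
      exact hgr.convMul_preservesGrading ih hgr.oneSubId_preservesGrading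
  have hN0 : ∀ {k n}, n < k → ∀ x ∈ ℬ n, (N ^ k) x = 0 :=
    fun hnk _ hx => hgr.oneSubId_pow_apply_eq_zero hnk hx
  have hG : ∀ {m n}, m ≤ n → ∀ x ∈ ℬ m,
      (∑ k ∈ Finset.range (n + 1), N ^ k) x = (∑ k ∈ Finset.range (m + 1), N ^ k) x := by
    intro m n hmn x hx
    induction n, hmn using Nat.le_induction with
    | base => rfl
    | succ n hmn ih =>
      rw [← ih, Finset.sum_range_succ _ (n + 1), ofConv_add, LinearMap.add_apply,
        hN0 (by omega) x hx, add_zero]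
  obtain ⟨S, hS⟩ : ∃ S : H →ₗ[ℂ] H,
      ∀ {m n}, m ≤ n → ∀ x ∈ ℬ m, S x = (∑ k ∈ Finset.range (n + 1), N ^ k) x :=
    ⟨hgr.1.glue fun n => (∑ k ∈ Finset.range (n + 1), N ^ k).ofConv ∘ₗ (ℬ n).subtype,
      fun hmn x hx => by rw [hG hmn x hx]; exact hgr.1.glue_apply_of_mem _ hx⟩
  have hid : toConv LinearMap.id = 1 - N := (sub_sub_cancel _ _).symm
  refine ⟨S, fun n x hx => ?_, WithConv.ext (hgr.1.linearMap_ext fun n x hx => ?_),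
    WithConv.ext (hgr.1.linearMap_ext fun n x hx => ?_)⟩
  · rw [hS le_rfl x hx, ofConv_sum, LinearMap.sum_apply]
    exact Submodule.sum_mem _ fun k _ => hN k n x hx
  · change (toConv S * toConv LinearMap.id : WithConv (H →ₗ[ℂ] H)) x = (1 : WithConv (H →ₗ[ℂ] H)) x
    rw [hgr.convMul_apply_congr (fun i hi a ha => hS hi a ha) (fun _ _ _ _ => rfl) hx, hid,
      geom_sum_mul_neg]
    simp [hN0 (Nat.lt_succ_self n) x hx]
  · change (toConv LinearMap.id * toConv S : WithConv (H →ₗ[ℂ] H)) x = (1 : WithConv (H →ₗ[ℂ] H)) x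
    rw [hgr.convMul_apply_congr (fun _ _ _ _ => rfl) (fun i hi a ha => hS hi a ha) hx, hid,
      mul_neg_geom_sum]
    simp [hN0 (Nat.lt_succ_self n) x hx]

end Bialgebra

section Hopf

variable {H : Type} [Ring H] [HopfAlgebra ℂ H] {ℬ : ℕ → Submodule ℂ H}

local notation "𝑺" => toConv (HopfAlgebra.antipode ℂ (A := H))

theorem antipode_preservesGrading (hgr : IsGradedConnected H ℬ) :
    PreservesGrading ℬ (HopfAlgebra.antipode ℂ (A := H)) := by
  obtain ⟨S, hSgr, -, hS⟩ := hgr.exists_antipode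
  have : 𝑺 = toConv S := left_inv_eq_right_inv LinearMap.antipode_mul_id hS
  rwa [toConv_injective this]

noncomputable def degreeOp (hgr : IsGradedConnected H ℬ) : H →ₗ[ℂ] H :=
  hgr.1.glue fun n => (n : ℂ) • (ℬ n).subtype

theorem degreeOp_apply (hgr : IsGradedConnected H ℬ) {n : ℕ} {x : H} (hx : x ∈ ℬ n) :
    hgr.degreeOp x = (n : ℂ) • x :=
  hgr.1.glue_apply_of_mem _ hx

theorem degreeOp_preservesGrading (hgr : IsGradedConnected H ℬ) :
    PreservesGrading ℬ hgr.degreeOp :=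
  fun n x hx => by rw [hgr.degreeOp_apply hx]; exact Submodule.smul_mem _ _ hx

theorem comul_comp_degreeOp (hgr : IsGradedConnected H ℬ) :
    toConv (comul ∘ₗ hgr.degreeOp) = comulMap (toConv hgr.degreeOp) (toConv .id) +
      comulMap (toConv .id) (toConv hgr.degreeOp) := by
  refine WithConv.ext (hgr.1.linearMap_ext fun n x hx => ?_)
  simp only [LinearMap.comp_apply, hgr.degreeOp_apply hx, map_smul, ofConv_add,
    LinearMap.add_apply, comulMap]
  refine hgr.comul_induction hx (P := fun z => (n : ℂ) • z =
      TensorProduct.map hgr.degreeOp LinearMap.id z + TensorProduct.map LinearMap.id hgr.degreeOp z)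
    (by simp) (fun u v hu hv => by simp [smul_add, hu, hv, add_add_add_comm])
    fun i j hij a ha b hb => ?_
  simp [hgr.degreeOp_apply ha, hgr.degreeOp_apply hb, TensorProduct.smul_tmul', ← hij, add_smul]

noncomputable def dynkin (hgr : IsGradedConnected H ℬ) : WithConv (H →ₗ[ℂ] H) :=
  𝑺 * toConv hgr.degreeOp

theorem dynkin_preservesGrading (hgr : IsGradedConnected H ℬ) :
    PreservesGrading ℬ hgr.dynkin.ofConv :=
  hgr.convMul_preservesGrading hgr.antipode_preservesGrading hgr.degreeOp_preservesGrading

theorem isPrimitive_dynkin_apply [IsCocomm ℂ H] (hgr : IsGradedConnected H ℬ) (x : H) :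
    IsPrimitive ℂ (hgr.dynkin x) := by
  have key : toConv (comul ∘ₗ hgr.dynkin.ofConv) = comulMap hgr.dynkin 1 + comulMap 1 hgr.dynkin :=
    calc toConv (comul ∘ₗ hgr.dynkin.ofConv)
        = toConv (comul ∘ₗ 𝑺.ofConv) * toConv (comul ∘ₗ hgr.degreeOp) := comul_comp_convMul _ _
      _ = comulMap 𝑺 𝑺 * (comulMap (toConv hgr.degreeOp) (toConv .id) +
            comulMap (toConv .id) (toConv hgr.degreeOp)) := by
        rw [comul_comp_antipode, comul_comp_degreeOp]
      _ = comulMap hgr.dynkin (𝑺 * toConv .id) + comulMap (𝑺 * toConv .id) hgr.dynkin := by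
        rw [mul_add, comulMap_convMul, comulMap_convMul]
        rfl
      _ = comulMap hgr.dynkin 1 + comulMap 1 hgr.dynkin := by rw [LinearMap.antipode_mul_id]
  have := LinearMap.congr_fun (congrArg ofConv key) x
  simpa [IsPrimitive, comulMap_one_right_apply, comulMap_one_left_apply] using this

theorem dynkin_sub_smul_mem_decomposables (hgr : IsGradedConnected H ℬ) {n : ℕ} {x : H}
    (hx : x ∈ ℬ n) : hgr.dynkin x - (n : ℂ) • x ∈ decomposables ℬ n := by
  -- both terms are images of `Δ x`: `D x = μ ((S ⊗ E) (Δ x))` and `x = (ε ⊗ id) (Δ x)`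
  have h := hgr.comul_induction hx (P := fun z => LinearMap.mul' ℂ H
      (TensorProduct.map (HopfAlgebra.antipode ℂ) hgr.degreeOp z) -
        (n : ℂ) • TensorProduct.lid ℂ H (counit.rTensor H z) ∈ decomposables ℬ n)
    (by simp) (fun u v hu hv => by simpa [add_sub_add_comm, smul_add] using add_mem hu hv)
    fun i j hij a ha b hb => ?_
  · simpa [Coalgebra.rTensor_counit_comul, dynkin] using h
  simp only [TensorProduct.map_tmul, LinearMap.mul'_apply, LinearMap.rTensor_tmul,
    TensorProduct.lid_tmul]
  rcases i with _ | i
  · have hSa : HopfAlgebra.antipode ℂ a = counit (R := ℂ) a • 1 := by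
      conv_lhs => rw [← hgr.counit_smul_one ha]
      rw [map_smul, HopfAlgebra.antipode_one]
    simp [hSa, hgr.degreeOp_apply hb, ← hij, smul_smul]
  rw [hgr.2.2.2.2 _ i.succ_pos a ha, zero_smul, smul_zero, sub_zero]
  rcases j with _ | j
  · simp [hgr.degreeOp_apply hb]
  · exact hij ▸ mul_mem_decomposables i.succ_pos j.succ_pos
      (hgr.antipode_preservesGrading _ a ha) (hgr.degreeOp_preservesGrading _ b hb)

theorem exists_isPrimitive_sub_mem_decomposables [IsCocomm ℂ H] (hgr : IsGradedConnected H ℬ)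
    {n : ℕ} (hn : 0 < n) {x : H} (hx : x ∈ ℬ n) :
    ∃ p ∈ ℬ n, IsPrimitive ℂ p ∧ x - p ∈ decomposables ℬ n := by
  have hn' : (n : ℂ) ≠ 0 := Nat.cast_ne_zero.2 hn.ne'
  refine ⟨(n : ℂ)⁻¹ • hgr.dynkin x, Submodule.smul_mem _ _ (hgr.dynkin_preservesGrading n x hx),
    (hgr.isPrimitive_dynkin_apply x).smul _, ?_⟩
  have : x - (n : ℂ)⁻¹ • hgr.dynkin x = -(n : ℂ)⁻¹ • (hgr.dynkin x - (n : ℂ) • x) := by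
    rw [neg_smul, smul_sub, smul_smul, inv_mul_cancel₀ hn', one_smul, neg_sub]
  rw [this]
  exact Submodule.smul_mem _ _ (hgr.dynkin_sub_smul_mem_decomposables hx)

end Hopf

end PaperGradedBialg.IsGradedConnected

namespace PaperGradedBialg

theorem IsCocommutative.isCocomm {H : Type} [Ring H] [Bialgebra ℂ H] (hcc : IsCocommutative H) :
    IsCocomm ℂ H :=
  ⟨LinearMap.ext hcc⟩

theorem IsGradedConnected.exists_isPrimitive_free {H : Type} [Ring H] [Bialgebra ℂ H]
    [IsCocomm ℂ H] {ℬ : ℕ → Submodule ℂ H} (hgr : IsGradedConnected H ℬ)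
    [∀ n, FiniteDimensional ℂ (ℬ n)] {F : Set H} (hF : IsFreeOnHomogeneous H ℬ F) :
    ∃ (d : F → ℕ) (g : F → H), (∀ x, 0 < d x) ∧ (∀ x, g x ∈ ℬ (d x)) ∧
      (∀ x, IsPrimitive ℂ (g x)) ∧ Function.Bijective (FreeAlgebra.lift ℂ g) := by
  have := hgr.gradedMonoid
  choose d hd hdF using hF.1
  have hdF' : ∀ x : F, (x : H) ∈ ℬ (d x x.2) := fun x => hdF x x.2
  obtain ⟨S, -, hS1, hS2⟩ := hgr.exists_antipode
  let := HopfAlgebra.ofConvInverse S hS1 hS2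
  choose g hgd hgp hgF using fun x : F =>
    hgr.exists_isPrimitive_sub_mem_decomposables (hd x x.2) (hdF' x)
  refine ⟨fun x => d x x.2, g, fun x => hd x x.2, hgd, hgp, ?_⟩
  let T := (FreeAlgebra.lift ℂ g).comp (AlgEquiv.ofBijective _ hF.2).symm.toAlgHom
  have hT : ∀ x : F, T x = g x := fun x => by
    have : (AlgEquiv.ofBijective _ hF.2).symm (x : H) = FreeAlgebra.ι ℂ x :=
      (AlgEquiv.symm_apply_eq _).2 (by simp)
    simp [T, this]
  have hTbij : Function.Bijective T.toLinearMap := hgr.1.bijective_of_map_eq fun n => le_antisymm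
    (map_le_of_free hgr.1 hdF' hF.2 T (fun x => hT x ▸ hgd x) n)
    (le_map_of_sub_mem_decomposables hgr.1 (fun x : F => hd x x.2) hdF' hF.2 T
      (fun x => hT x ▸ hgF x) n)
  have : FreeAlgebra.lift ℂ g = T.comp (FreeAlgebra.lift ℂ Subtype.val) :=
    FreeAlgebra.hom_ext (funext fun x => by simp [hT])
  rw [this]
  exact hTbij.comp hF.2

end PaperGradedBialg

open PaperGradedBialg in
/-- **Theorem 4.2:** two free graded connected cocommutative `ℂ`-bialgebras with
finite-dimensional graded components are isomorphic as graded bialgebras if and only if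
their graded components have the same dimensions. -/
theorem free_graded_cocommutative_iso_iff_dimensions_agree
    (H H' : Type) [Ring H] [Ring H'] [Bialgebra ℂ H] [Bialgebra ℂ H']
    (ℬ : ℕ → Submodule ℂ H) (ℬ' : ℕ → Submodule ℂ H')
    (hgr : IsGradedConnected H ℬ) (hgr' : IsGradedConnected H' ℬ')
    (hcc : IsCocommutative H) (hcc' : IsCocommutative H')
    (F : Set H) (hF : IsFreeOnHomogeneous H ℬ F)
    (F' : Set H') (hF' : IsFreeOnHomogeneous H' ℬ' F')
    (hfd : ∀ n : ℕ, FiniteDimensional ℂ (ℬ n)) (hfd' : ∀ n : ℕ, FiniteDimensional ℂ (ℬ' n)) :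
    (∃ e : H ≃ₐc[ℂ] H', ∀ n : ℕ, (fun x => e x) '' (ℬ n : Set H) = (ℬ' n : Set H')) ↔
      ∀ n : ℕ, Module.finrank ℂ (ℬ n) = Module.finrank ℂ (ℬ' n) := by
  constructor
  · rintro ⟨e, he⟩ n
    have hmap : (ℬ n).map (e.toLinearEquiv : H →ₗ[ℂ] H') = ℬ' n :=
      SetLike.coe_injective (by rw [Submodule.map_coe]; exact he n)
    rw [← hmap, LinearEquiv.finrank_map_eq]
  intro hdim
  have := hcc.isCocomm; have := hcc'.isCocomm
  have := hgr.gradedMonoid; have := hgr'.gradedMonoid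
  obtain ⟨d, g, hd, hgd, hgp, hg⟩ := hgr.exists_isPrimitive_free hF
  obtain ⟨d', g', hd', hgd', hgp', hg'⟩ := hgr'.exists_isPrimitive_free hF'
  obtain ⟨σ, hσ⟩ :=
    exists_equiv_comp_eq_of_finrank_eq hgr.1 hgr'.1 hd hgd hg hd' hgd' hg' hdim
  have he := algEquivOfFree_apply hg hg' σ
  refine ⟨(algEquivOfFree hg hg' σ).toBialgEquivOfIsPrimitive hg.2 hgp
    fun x => he x ▸ hgp' (σ x), fun n => ?_⟩
  rw [← (algEquivOfFree hg hg' σ).map_eq_of_free hgr.1 hgr'.1 hgd hg hgd' hg' σ he hσ n,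
    Submodule.map_coe]
  rfl
end

section
/- Assume a(ι) = b(ι) = 1 and let u ∈ V satisfy a(u) = 1 and b(u) = 0. Then for every n ≥ 1, Δ(u^{⊗(n−1)}) = Σ_{j=0}^{n} u^{⊗(j−1)} ⊗ u^{⊗(n−j−1)}, where u^{⊗(−1)} denotes 1 ∈ H_0 and u^{⊗0} denotes 1₁ ∈ H_1. (Thus the elements u^{⊗(n−1)} satisfy the defining coproduct rule of the complete homogeneous basis H_n of the noncommutative symmetric functions.) -/
open scoped TensorProduct

noncomputable section

namespace PaperCHA

/-- Type synonym for the tensor algebra of `V`, to be equipped with the (non-unital)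
`ι`-insertion multiplication `u ∘ v = u ⊗ ι ⊗ v`. -/
def IotaCore (V : Type) [AddCommGroup V] [Module ℂ V] (_iv : V) : Type := TensorAlgebra ℂ V

section Core

variable {V : Type} [AddCommGroup V] [Module ℂ V] {iv : V}

instance : AddCommGroup (IotaCore V iv) := inferInstanceAs (AddCommGroup (TensorAlgebra ℂ V))
instance : Module ℂ (IotaCore V iv) := inferInstanceAs (Module ℂ (TensorAlgebra ℂ V))

/-- The identity map, regarding an element of the tensor algebra as an element of
`IotaCore V iv`. -/
def IotaCore.ofT (iv : V) : TensorAlgebra ℂ V → IotaCore V iv := id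

/-- The identity map, regarding an element of `IotaCore V iv` as an element of the
tensor algebra. -/
def IotaCore.toT : IotaCore V iv → TensorAlgebra ℂ V := id

instance : NonUnitalRing (IotaCore V iv) :=
  { (inferInstanceAs (AddCommGroup (IotaCore V iv)) : AddCommGroup (IotaCore V iv)) with
    mul := fun u v => IotaCore.ofT iv (IotaCore.toT u * TensorAlgebra.ι ℂ iv * IotaCore.toT v)
    left_distrib := fun u v w => by
      show IotaCore.toT u * TensorAlgebra.ι ℂ iv * (IotaCore.toT v + IotaCore.toT w)
          = IotaCore.toT u * TensorAlgebra.ι ℂ iv * IotaCore.toT v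
            + IotaCore.toT u * TensorAlgebra.ι ℂ iv * IotaCore.toT w
      rw [mul_add]
    right_distrib := fun u v w => by
      show (IotaCore.toT u + IotaCore.toT v) * TensorAlgebra.ι ℂ iv * IotaCore.toT w
          = IotaCore.toT u * TensorAlgebra.ι ℂ iv * IotaCore.toT w
            + IotaCore.toT v * TensorAlgebra.ι ℂ iv * IotaCore.toT w
      rw [add_mul, add_mul]
    zero_mul := fun u => by
      show (0 : TensorAlgebra ℂ V) * TensorAlgebra.ι ℂ iv * IotaCore.toT u = 0
      rw [zero_mul, zero_mul]
    mul_zero := fun u => by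
      show IotaCore.toT u * TensorAlgebra.ι ℂ iv * (0 : TensorAlgebra ℂ V) = 0
      rw [mul_zero]
    mul_assoc := fun u v w => by
      show IotaCore.toT u * TensorAlgebra.ι ℂ iv * IotaCore.toT v * TensorAlgebra.ι ℂ iv
            * IotaCore.toT w
          = IotaCore.toT u * TensorAlgebra.ι ℂ iv
            * (IotaCore.toT v * TensorAlgebra.ι ℂ iv * IotaCore.toT w)
      simp only [mul_assoc] }

instance : SMulCommClass ℂ (IotaCore V iv) (IotaCore V iv) :=
  ⟨fun c u v => by
    show c • (IotaCore.toT u * TensorAlgebra.ι ℂ iv * IotaCore.toT v)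
        = IotaCore.toT u * TensorAlgebra.ι ℂ iv * (c • IotaCore.toT v)
    rw [mul_smul_comm]⟩

instance : IsScalarTower ℂ (IotaCore V iv) (IotaCore V iv) :=
  ⟨fun c u v => by
    show (c • IotaCore.toT u) * TensorAlgebra.ι ℂ iv * IotaCore.toT v
        = c • (IotaCore.toT u * TensorAlgebra.ι ℂ iv * IotaCore.toT v)
    rw [smul_mul_assoc, smul_mul_assoc]⟩

end Core

/-- The Hopf algebra `H_{(ι,a,b)}` of the paper, as a graded algebra: the unitalization
of the tensor algebra of `V` equipped with the `ι`-insertion product.  Its `n`-th graded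
component (`n ≥ 1`) is `V^{⊗(n-1)}`, and the `0`-th is `ℂ·1`. -/
abbrev HAlg (V : Type) [AddCommGroup V] [Module ℂ V] (iv : V) : Type :=
  Unitization ℂ (IotaCore V iv)

section HAlg

variable {V : Type} [AddCommGroup V] [Module ℂ V]

/-- The pure tensor `x₁ ⊗ ⋯ ⊗ x_{n-1} ∈ H_n` associated to a list `[x₁, …, x_{n-1}]`
(the empty list gives `1₁ ∈ H_1`). -/
def pt (iv : V) (l : List V) : HAlg V iv :=
  Unitization.inr (IotaCore.ofT iv ((l.map (TensorAlgebra.ι ℂ)).prod))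

/-- The grading of `H`: `grade iv 0 = ℂ·1` and `grade iv (n+1)` is the span of the
pure tensors of `n` vectors, i.e. `V^{⊗ n}`. -/
def grade (iv : V) : ℕ → Submodule ℂ (HAlg V iv)
  | 0 => Submodule.span ℂ {1}
  | (n + 1) => Submodule.span ℂ {x | ∃ l : List V, l.length = n ∧ x = pt iv l}

/-- The linear projection `ε : H → ℂ` onto the degree-zero component `H_0 = ℂ·1`. -/
def eps (iv : V) : HAlg V iv →ₗ[ℂ] ℂ :=
  (Unitization.fstHom ℂ (IotaCore V iv)).toLinearMap

/-- Auxiliary function computing `T_φ(S; ψ)` on the sorted list `s₁ < ⋯ < s_k` of a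
nonempty subset `S ⊆ {1, …, n}`: returns the scalar `c` (together with all scalar factors
`φ(ψ_{s_i})` coming from non-consecutive entries) and the list `[v₁, …, v_{k-1}]`. -/
def Tlist (iv : V) (φ : V →ₗ[ℂ] ℂ) (ψ : ℕ → V) (n : ℕ) : List ℕ → ℂ × List V
  | [] => (1, [])
  | [s] => (if s = n then 1 else φ (ψ s), [])
  | s :: t :: rest =>
    let p := Tlist iv φ ψ n (t :: rest)
    if t = s + 1 then (p.1, ψ s :: p.2) else (φ (ψ s) * p.1, iv :: p.2)

/-- The element `T_φ(S; ψ) ∈ H` for a subset `S ⊆ {1, …, n}` (one gets `1 ∈ H_0` for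
`S = ∅`, and `c • (v₁ ⊗ ⋯ ⊗ v_{k-1}) ∈ H_k` for `S = {s₁ < ⋯ < s_k}`). -/
def Tfun (iv : V) (φ : V →ₗ[ℂ] ℂ) (ψ : ℕ → V) (n : ℕ) (S : Finset ℕ) : HAlg V iv :=
  if S = ∅ then 1
  else (Tlist iv φ ψ n (S.sort (· ≤ ·))).1 • pt iv (Tlist iv φ ψ n (S.sort (· ≤ ·))).2

/-- The indexing `ψ : {1, …, n} → V` (1-based) associated to a list `[ψ₁, …, ψ_{n-1}]`. -/
def psiOf (l : List V) : ℕ → V := fun j => l.getD (j - 1) 0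

/-- The defining property of the coproduct `Δ` of `H_{(ι,a,b)}`: `Δ(1) = 1 ⊗ 1` and, on
a pure tensor `ψ = ψ₁ ⊗ ⋯ ⊗ ψ_{n-1} ∈ H_n`,
`Δ(ψ) = ∑_{A ⊆ {1,…,n}} T_a(A; ψ) ⊗ T_b(Aᶜ; ψ)`. -/
def DeltaSpec (iv : V) (a b : V →ₗ[ℂ] ℂ)
    (Δ : HAlg V iv →ₗ[ℂ] HAlg V iv ⊗[ℂ] HAlg V iv) : Prop :=
  Δ 1 = 1 ⊗ₜ[ℂ] 1 ∧
  ∀ l : List V,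
    Δ (pt iv l) =
      ∑ A ∈ (Finset.Icc 1 (l.length + 1)).powerset,
        Tfun iv a (psiOf l) (l.length + 1) A ⊗ₜ[ℂ]
          Tfun iv b (psiOf l) (l.length + 1) (Finset.Icc 1 (l.length + 1) \ A)

end HAlg

end PaperCHA

/-! For `ψ = u^{⊗(n-1)}` every scalar `φ(ψ_s)` occurring in `T_φ(S; ψ)` is `φ(u)`: one for each
gap of `S` and one more if `max S < n`. As `b(u) = 0`, the term of `A` in `Δ(ψ)` vanishes unless
`Aᶜ = {j+1, …, n}`, i.e. `A = {1, …, j}`; then `T_b(Aᶜ; ψ) = u^{⊗(n-j-1)}`, and the only scalar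
in `T_a(A; ψ)` is `a(u) = 1`, so `T_a(A; ψ) = u^{⊗(j-1)}`. -/

namespace PaperCHA

theorem sort_Icc (m n : ℕ) : (Finset.Icc m n).sort (· ≤ ·) = List.range' m (n + 1 - m) :=
  List.mergeSort_eq_self _ (List.Pairwise.imp Nat.le_of_lt List.pairwise_lt_range')

theorem psiOf_replicate {V : Type} [AddCommGroup V] (u : V) {m j : ℕ} (h1 : 1 ≤ j) (h2 : j ≤ m) :
    psiOf (List.replicate m u) j = u := by
  simp [psiOf, List.getD_eq_getElem?_getD, show j - 1 < m by omega]

theorem sum_powerset_Icc_eq_sum_range {M : Type*} [AddCommMonoid M] (n : ℕ)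
    (f : Finset ℕ → Finset ℕ → M)
    (hf : ∀ A, ∀ B ⊆ Finset.Icc 1 n, (∀ i, B ≠ Finset.Icc i n) → f A B = 0) :
    ∑ A ∈ (Finset.Icc 1 n).powerset, f A (Finset.Icc 1 n \ A)
      = ∑ j ∈ Finset.range (n + 1), f (Finset.Icc 1 j) (Finset.Icc (j + 1) n) := by
  have hsub : (Finset.range (n + 1)).image (Finset.Icc 1) ⊆ (Finset.Icc 1 n).powerset := by
    simp only [Finset.subset_iff, Finset.mem_image, Finset.mem_range, Finset.mem_powerset]
    rintro _ ⟨j, hj, rfl⟩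
    exact Finset.Icc_subset_Icc_right (by omega)
  have hinj : Set.InjOn (Finset.Icc 1) (Finset.range (n + 1) : Set ℕ) := fun i _ j _ hij => by
    simpa using congrArg Finset.card hij
  rw [← Finset.sum_subset hsub, Finset.sum_image hinj]
  · refine Finset.sum_congr rfl fun j _ => congrArg _ ?_
    ext x
    simp only [Finset.mem_sdiff, Finset.mem_Icc]
    omega
  · intro A hA hAinit
    refine hf A _ Finset.sdiff_subset fun i hi => hAinit ?_
    refine Finset.mem_image.2 ⟨min (i - 1) n, Finset.mem_range.2 (by omega), ?_⟩
    rw [← Finset.sdiff_sdiff_eq_self (Finset.mem_powerset.1 hA), hi]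
    ext x
    simp only [Finset.mem_sdiff, Finset.mem_Icc]
    omega

section ConstantTensor

variable {V : Type} [AddCommGroup V] [Module ℂ V] (iv : V) (φ : V →ₗ[ℂ] ℂ)
  {ψ : ℕ → V} {n : ℕ} {u : V}

theorem Tlist_range' (hψ : ∀ j, 1 ≤ j → j < n → ψ j = u) {m k : ℕ} (hm : 1 ≤ m)
    (hmk : m + k ≤ n) (hφ : m + k = n ∨ φ u = 1) :
    Tlist iv φ ψ n (List.range' m (k + 1)) = (1, List.replicate k u) := by
  induction k generalizing m with
  | zero =>
    rcases eq_or_ne m n with rfl | hmn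
    · simp [Tlist]
    · simp [Tlist, hmn, hψ m hm (by omega), hφ.resolve_left (by omega)]
  | succ k ih =>
    have htail := ih (m := m + 1) (by omega) (by omega) (hφ.imp (by omega) id)
    rw [List.range'_succ] at htail
    rw [List.range'_succ, List.range'_succ]
    simp only [Tlist, htail, hψ m hm (by omega)]
    rfl

theorem Tfun_Icc (hψ : ∀ j, 1 ≤ j → j < n → ψ j = u) {i j : ℕ} (hi : 1 ≤ i) (hj : j ≤ n)
    (hφ : j = n ∨ φ u = 1) :
    Tfun iv φ ψ n (Finset.Icc i j) = if j < i then 1 else pt iv (List.replicate (j - i) u) := by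
  split_ifs with hji
  · simp [Tfun, Finset.Icc_eq_empty_of_lt hji]
  · have hsort : (Finset.Icc i j).sort (· ≤ ·) = List.range' i (j - i + 1) := by
      rw [sort_Icc]; congr 1; omega
    rw [Tfun, if_neg (Finset.nonempty_Icc.2 (by omega)).ne_empty, hsort,
      Tlist_range' iv φ hψ hi (by omega) (hφ.imp (by omega) id), one_smul]

theorem Tlist_fst_eq_zero_or_eq_range' (hψ : ∀ j, 1 ≤ j → j < n → ψ j = u) (hu : φ u = 0) :
    ∀ L : List ℕ, L.Pairwise (· < ·) → (∀ s ∈ L, 1 ≤ s ∧ s ≤ n) →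
      (Tlist iv φ ψ n L).1 = 0 ∨ ∃ i, L = List.range' i (n + 1 - i)
  | [], _, _ => Or.inr ⟨n + 1, by simp⟩
  | [s], _, hL => by
    obtain ⟨hs1, hsn⟩ := hL s (by simp)
    rcases eq_or_ne s n with rfl | hs
    · exact Or.inr ⟨s, by simp⟩
    · exact Or.inl (by simp [Tlist, hs, hψ s hs1 (by omega), hu])
  | s :: t :: rest, hsorted, hL => by
    obtain ⟨hs1, -⟩ := hL s (by simp)
    have hst : s < t := List.rel_of_pairwise_cons hsorted (by simp)
    have htn : t ≤ n := (hL t (by simp)).2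
    rcases Tlist_fst_eq_zero_or_eq_range' hψ hu (t :: rest) hsorted.of_cons
        (fun x hx => hL x (List.mem_cons_of_mem _ hx)) with htail | ⟨i, htail⟩
    · left
      simp only [Tlist]
      split_ifs <;> simp [htail]
    · rcases eq_or_ne t (s + 1) with rfl | hts
      · refine Or.inr ⟨s, ?_⟩
        obtain rfl : i = s + 1 := by
          have hhead := congrArg List.head? htail
          simp [List.head?_range'] at hhead
          omega
        rw [htail, show n + 1 - s = n + 1 - (s + 1) + 1 by omega, List.range'_succ]
      · exact Or.inl (by simp [Tlist, hts, hψ s hs1 (by omega), hu])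

theorem Tfun_eq_zero_of_ne_Icc (hψ : ∀ j, 1 ≤ j → j < n → ψ j = u) (hu : φ u = 0)
    {S : Finset ℕ} (hS : S ⊆ Finset.Icc 1 n) (hne : ∀ i, S ≠ Finset.Icc i n) :
    Tfun iv φ ψ n S = 0 := by
  have hS0 : S ≠ ∅ := fun h => hne (n + 1) (by simp [h])
  have hbound : ∀ s ∈ S.sort (· ≤ ·), 1 ≤ s ∧ s ≤ n := fun s hs =>
    Finset.mem_Icc.1 (hS ((Finset.mem_sort _).1 hs))
  rcases Tlist_fst_eq_zero_or_eq_range' iv φ hψ hu _ (Finset.sortedLT_sort S).pairwise hbound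
    with hzero | ⟨i, hsort⟩
  · rw [Tfun, if_neg hS0, hzero, zero_smul]
  · refine absurd ?_ (hne i)
    rw [← Finset.sort_toFinset S (· ≤ ·), hsort, Nat.Icc_eq_range']
    exact (List.toFinset_eq List.nodup_range').symm

end ConstantTensor

end PaperCHA

open PaperCHA in
theorem power_of_u_has_NSym_H_coproduct_general
    {V : Type} [AddCommGroup V] [Module ℂ V] (iv : V) (a b : V →ₗ[ℂ] ℂ)
    (Δ : HAlg V iv →ₗ[ℂ] HAlg V iv ⊗[ℂ] HAlg V iv) (hΔ : DeltaSpec iv a b Δ)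
    (u : V) (hua : a u = 1) (hub : b u = 0) :
    ∀ n : ℕ, 1 ≤ n →
      Δ (pt iv (List.replicate (n - 1) u))
        = ∑ j ∈ Finset.range (n + 1),
            (if j = 0 then (1 : HAlg V iv) else pt iv (List.replicate (j - 1) u)) ⊗ₜ[ℂ]
              (if j = n then (1 : HAlg V iv) else pt iv (List.replicate (n - j - 1) u)) := by
  intro n hn
  have hψ : ∀ j, 1 ≤ j → j < n → psiOf (List.replicate (n - 1) u) j = u :=
    fun j h1 h2 => psiOf_replicate u h1 (by omega)
  rw [hΔ.2, List.length_replicate, Nat.sub_add_cancel hn]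
  generalize psiOf (List.replicate (n - 1) u) = ψ at hψ
  rw [sum_powerset_Icc_eq_sum_range n fun A B => Tfun iv a ψ n A ⊗ₜ[ℂ] Tfun iv b ψ n B]
  · refine Finset.sum_congr rfl fun j hj => ?_
    have hjn : j ≤ n := Nat.lt_succ_iff.1 (Finset.mem_range.1 hj)
    rw [Tfun_Icc iv a hψ le_rfl hjn (Or.inr hua), Tfun_Icc iv b hψ (by omega) le_rfl (Or.inl rfl),
      Nat.sub_sub]
    simp only [Nat.le_zero, Nat.lt_succ_iff, hjn.ge_iff_eq]
  · intro A B hB hne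
    rw [Tfun_eq_zero_of_ne_Icc iv b hψ hub hB hne, TensorProduct.tmul_zero]

open PaperCHA in
/-- **The `H`-basis coproduct (Lemma 4.4, second case):** if `a(ι) = b(ι) = 1` and
`u ∈ V` satisfies `a(u) = 1`, `b(u) = 0`, then
`Δ(u^{⊗(n-1)}) = ∑_{j=0}^{n} u^{⊗(j-1)} ⊗ u^{⊗(n-j-1)}`, with `u^{⊗(-1)} = 1 ∈ H_0`;
these are the defining relations of the complete homogeneous generators of `NSym`. -/
theorem power_of_u_has_NSym_H_coproduct
    {V : Type} [AddCommGroup V] [Module ℂ V] (iv : V) (a b : V →ₗ[ℂ] ℂ)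
    (ha : a iv = 1) (hb : b iv = 1)
    (Δ : HAlg V iv →ₗ[ℂ] HAlg V iv ⊗[ℂ] HAlg V iv) (hΔ : DeltaSpec iv a b Δ)
    (u : V) (hua : a u = 1) (hub : b u = 0) :
    ∀ n : ℕ, 1 ≤ n →
      Δ (pt iv (List.replicate (n - 1) u))
        = ∑ j ∈ Finset.range (n + 1),
            (if j = 0 then (1 : HAlg V iv) else pt iv (List.replicate (j - 1) u)) ⊗ₜ[ℂ]
              (if j = n then (1 : HAlg V iv) else pt iv (List.replicate (n - j - 1) u)) :=
  power_of_u_has_NSym_H_coproduct_general iv a b Δ hΔ u hua hub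
end
end
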